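/- arXiv:1004.5032 — 2 statements merged into one kernel-verified Lean document; each statement's English description precedes it below -/
import Mathlib

section
/- Let L/K be a finite unramified extension of nonarchimedean local fields with Galois group G. Then H¹(G, GL_n(O_L)) is trivial: every 1-cocycle G → GL_n(O_L) is a coboundary. -/
/-!
Over the residue field `k` of `O`, Hilbert 90 for `GL_n` holds as soon as `G` acts faithfully
on `k`: by Dedekind's independence of characters the vectors fixed by the twisted action
`v ↦ A σ *ᵥ σ • v` span `kⁿ`, and a basis of fixed vectors gives a trivialising matrix `b`.

Unramifiedness makes `G` act faithfully on `k`: if `σ` is trivial on `k` and fixes the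
uniformizer `π₀ ∈ K`, then `(σ - 1) / πʲ` (for the largest possible `j`) reduces modulo `π` to a
derivation `O → k` that kills `π`; as `k` is finite, hence perfect, every element of `O` is a
`p`-th power modulo `π`, so this derivation vanishes, contradicting the choice of `j`.

Finally lift `b` to a matrix `a` over `O` and pick `θ ∈ O` whose reduction has nonzero trace
`∑ σ • θ̄`. The twisted average `u = ∑ σ, A σ * σ • (θ • a)` is fixed by the cocycle and reduces to
`(∑ σ • θ̄) • b`, so `u ∈ GL_n(O)` and no successive approximation is needed.
-/

/-- The entrywise action of an automorphism σ of L on GL_n(L). -/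
def galAct {K L : Type*} [Field K] [Field L] [Algebra K L] {n : ℕ}
    (σ : L ≃ₐ[K] L) (g : (Matrix (Fin n) (Fin n) L)ˣ) :
    (Matrix (Fin n) (Fin n) L)ˣ :=
  Units.map (RingEquiv.mapMatrix σ.toRingEquiv :
      Matrix (Fin n) (Fin n) L ≃+* Matrix (Fin n) (Fin n) L).toRingHom.toMonoidHom g

/-- `GL_n(O_L)`: invertible matrices whose entries, and whose inverse's
entries, lie in the valuation ring `O`. -/
def glO {L : Type*} [Field L] (O : ValuationSubring L) {n : ℕ}
    (g : (Matrix (Fin n) (Fin n) L)ˣ) : Prop :=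
  (∀ i j, (g : Matrix (Fin n) (Fin n) L) i j ∈ O) ∧
    (∀ i j, ((g⁻¹ : (Matrix (Fin n) (Fin n) L)ˣ) : Matrix (Fin n) (Fin n) L) i j ∈ O)

open IsLocalRing

namespace Matrix

variable {G R n : Type*} [Monoid G] [Semiring R] [MulSemiringAction G R]

instance mulSemiringAction [Fintype n] [DecidableEq n] : MulSemiringAction G (Matrix n n R) where
  smul_one g := by ext i j; by_cases h : i = j <;> simp [one_apply, h]
  smul_mul g M N := by ext i j; simp [mul_apply, Finset.smul_sum, smul_mul']

theorem smul_mulVec_smul [Fintype n] (g : G) (M : Matrix n n R) (v : n → R) :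
    g • (M *ᵥ v) = (g • M) *ᵥ (g • v) := by
  ext i; simp [mulVec, dotProduct, Finset.smul_sum, smul_mul']

theorem smul_smul_distrib (g : G) (r : R) (M : Matrix n n R) : g • (r • M) = (g • r) • g • M := by
  ext; simp [smul_mul']

end Matrix

open Matrix

theorem linearIndependent_smul_of_faithfulSMul (G k : Type*) [Monoid G] [Field k]
    [MulSemiringAction G k] [FaithfulSMul G k] :
    LinearIndependent k (fun g : G => (g • · : k → k)) :=
  (linearIndependent_monoidHom k k).comp
    (fun g => (MulSemiringAction.toRingHom G k g : k →* k))
    fun _ _ hgh => eq_of_smul_eq_smul fun x => DFunLike.congr_fun hgh x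

theorem exists_sum_smul_ne_zero (G k : Type*) [Monoid G] [Fintype G] [Field k]
    [MulSemiringAction G k] [FaithfulSMul G k] : ∃ x : k, ∑ g : G, g • x ≠ 0 := by
  by_contra! h
  have := Fintype.linearIndependent_iff.mp (linearIndependent_smul_of_faithfulSMul G k)
    (fun _ => 1) (funext fun x => by simpa using h x) 1
  exact one_ne_zero this

def IsMatrixCocycle {G R n : Type*} [Monoid G] [Semiring R] [MulSemiringAction G R] [Fintype n]
    (A : G → Matrix n n R) : Prop :=
  ∀ g h, A (g * h) = A g * g • A h

namespace IsMatrixCocycle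

section Semiring

variable {G R n : Type*} [Group G] [Fintype G] [Semiring R] [MulSemiringAction G R] [Fintype n]
  {A : G → Matrix n n R}

theorem mulVec_smul_sum (hA : IsMatrixCocycle A) (h : G) (v : n → R) :
    A h *ᵥ h • ∑ g, A g *ᵥ g • v = ∑ g, A g *ᵥ g • v := by
  unfold IsMatrixCocycle at hA
  simp only [Finset.smul_sum, mulVec_sum, smul_mulVec_smul, mulVec_mulVec, ← hA, ← mul_smul]
  exact Equiv.sum_comp (Equiv.mulLeft h) fun g => A g *ᵥ g • v

theorem mul_smul_sum [DecidableEq n] (hA : IsMatrixCocycle A) (h : G) (M : Matrix n n R) :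
    A h * h • ∑ g, A g * g • M = ∑ g, A g * g • M := by
  unfold IsMatrixCocycle at hA
  simp only [Finset.smul_sum, Finset.mul_sum, smul_mul', ← mul_assoc, ← hA, ← mul_smul]
  exact Equiv.sum_comp (Equiv.mulLeft h) fun g => A g * g • M

end Semiring

section Field

variable {G k n : Type*} [Group G] [Fintype G] [Field k] [MulSemiringAction G k]
  [FaithfulSMul G k] [Fintype n] [DecidableEq n] {A : G → Matrix n n k}

theorem span_fixed_eq_top (hA : IsMatrixCocycle A) (hA1 : A 1 = 1) :
    Submodule.span k {v : n → k | ∀ g, A g *ᵥ g • v = v} = ⊤ := by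
  rw [Submodule.eq_top_iff']
  intro v
  by_contra hv
  obtain ⟨f, hfv, hf⟩ := Submodule.exists_dual_map_eq_bot_of_notMem hv inferInstance
  have hf0 : ∀ w ∈ {v : n → k | ∀ g, A g *ᵥ g • v = v}, f w = 0 := fun w hw =>
    (Submodule.mem_bot k).mp (hf ▸ Submodule.mem_map_of_mem (Submodule.subset_span hw))
  have hsum : ∑ g, f (A g *ᵥ g • v) • (g • · : k → k) = 0 := by
    ext x
    have hsmul : ∀ g : G, g • (x • v) = (g • x) • g • v := fun g => by ext; simp [smul_mul']
    simpa [hsmul, mulVec_smul, mul_comm] using hf0 _ (hA.mulVec_smul_sum · (x • v))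
  have := Fintype.linearIndependent_iff.mp (linearIndependent_smul_of_faithfulSMul G k) _ hsum 1
  simp only [hA1, one_smul, one_mulVec] at this
  exact hfv this

theorem exists_isUnit_fixed (hA : IsMatrixCocycle A) (hA1 : A 1 = 1) :
    ∃ b : Matrix n n k, IsUnit b ∧ ∀ g, A g * g • b = b := by
  have hspan := hA.span_fixed_eq_top hA1
  let B₀ := Module.Basis.ofSpan hspan.ge
  let B := B₀.reindex (B₀.indexEquiv (Pi.basisFun k n))
  have hB : ∀ j g, A g *ᵥ g • B j = B j := fun j =>
    Module.Basis.ofSpan_subset hspan.ge ⟨_, (B₀.reindex_apply _ j).symm⟩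
  refine ⟨(Matrix.of B)ᵀ, ?_, fun g => ?_⟩
  · rw [isUnit_transpose, ← linearIndependent_rows_iff_isUnit]
    exact B.linearIndependent
  · ext i j
    simpa [mul_apply, mulVec, dotProduct] using congrFun (hB j g) i

end Field

section LocalRing

variable {G R n : Type*} [Group G] [Fintype G] [CommRing R] [IsLocalRing R]
  [MulSemiringAction G R] [FaithfulSMul G (ResidueField R)] [Fintype n] [DecidableEq n]
  {A : G → Matrix n n R}

theorem exists_isUnit_fixed_of_isLocalRing (hA : IsMatrixCocycle A) (hA1 : A 1 = 1) :
    ∃ u : Matrix n n R, IsUnit u ∧ ∀ g, A g * g • u = u := by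
  let r : Matrix n n R →+* Matrix n n (ResidueField R) := (residue R).mapMatrix
  have hr : ∀ (g : G) M, r (g • M) = g • r M := fun _ _ => by ext; simp [r]
  obtain ⟨b, hb, hbA⟩ := exists_isUnit_fixed (A := fun g => r (A g))
    (fun g h => by simp only [hA g h, map_mul, hr]) (by simp [hA1])
  obtain ⟨a, rfl⟩ : ∃ a, r a = b :=
    ⟨.of fun i j => (residue_surjective (b i j)).choose,
      by ext; simp [r, (residue_surjective _).choose_spec]⟩
  obtain ⟨t, ht⟩ := exists_sum_smul_ne_zero G (ResidueField R)
  obtain ⟨θ, rfl⟩ := residue_surjective t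
  refine ⟨∑ g, A g * g • (θ • a), ?_, fun g => hA.mul_smul_sum g _⟩
  have hθa : r (θ • a) = residue R θ • r a := by ext; simp [r]
  have hred : r (∑ g, A g * g • (θ • a)) = (∑ g : G, g • residue R θ) • r a := by
    rw [map_sum, Finset.sum_smul]
    refine Finset.sum_congr rfl fun g _ => ?_
    rw [map_mul, hr, hθa, smul_smul_distrib, mul_smul_comm, hbA]
  rw [isUnit_iff_isUnit_det, ← isUnit_map_iff (residue R), RingHom.map_det, hred, det_smul]
  exact (ht.isUnit.pow _).mul ((isUnit_iff_isUnit_det _).mp hb)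

end LocalRing

end IsMatrixCocycle

theorem IsDiscreteValuationRing.exists_eq_pow_mul_isUnit {R ι : Type*} [CommRing R] [IsDomain R]
    [IsDiscreteValuationRing R] {ϖ : R} (hϖ : Irreducible ϖ) {f : ι → R} (hf : f ≠ 0) :
    ∃ (j : ℕ) (w : ι → R), (∀ i, f i = ϖ ^ j * w i) ∧ ∃ i, IsUnit (w i) := by
  obtain ⟨j, hj⟩ := ideal_eq_span_pow_irreducible (s := Ideal.span (Set.range f))
    (by simpa [Ideal.span_eq_bot, funext_iff] using hf) hϖ
  have hdvd : ∀ i, ϖ ^ j ∣ f i := fun i =>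
    Ideal.mem_span_singleton.mp (hj ▸ Ideal.subset_span ⟨i, rfl⟩)
  choose w hw using hdvd
  refine ⟨j, w, hw, ?_⟩
  by_contra! hw'
  have hle : Ideal.span (Set.range f) ≤ Ideal.span {ϖ ^ (j + 1)} := by
    rw [Ideal.span_le]
    rintro _ ⟨i, rfl⟩
    obtain ⟨c, hc⟩ : ϖ ∣ w i := by
      rw [← Ideal.mem_span_singleton, ← (irreducible_iff_uniformizer ϖ).mp hϖ]
      exact (mem_maximalIdeal _).mpr (hw' i)
    exact Ideal.mem_span_singleton.mpr ⟨c, by rw [hw, hc]; ring⟩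
  have := Ideal.mem_span_singleton.mp (hle (hj ▸ Ideal.mem_span_singleton_self _))
  rw [pow_dvd_pow_iff hϖ.ne_zero hϖ.not_isUnit] at this
  omega

theorem Derivation.eq_zero_of_forall_mem_maximalIdeal {R : Type*} [CommRing R] [IsLocalRing R]
    (p : ℕ) [CharP (ResidueField R) p] [PerfectRing (ResidueField R) p]
    (D : Derivation ℤ R (ResidueField R)) (hD : ∀ x ∈ maximalIdeal R, D x = 0) : D = 0 := by
  ext x
  obtain ⟨y, hy⟩ := (PerfectRing.bijective_frobenius (R := ResidueField R) (p := p)).2 (residue R x)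
  obtain ⟨y, rfl⟩ := residue_surjective y
  have hxy : x - y ^ p ∈ maximalIdeal R := by
    rw [← residue_eq_zero_iff, map_sub, map_pow, ← hy, sub_self]
  have hp : D (y ^ p) = 0 := by
    rw [leibniz_pow, ← Nat.cast_smul_eq_nsmul (ResidueField R), CharP.cast_eq_zero, zero_smul]
  simpa [hp] using hD _ hxy

namespace IsDiscreteValuationRing

variable {R : Type*} [CommRing R] [IsDomain R] [IsDiscreteValuationRing R] {ϖ : R}

theorem ringHom_eq_id_of_map_irreducible (p : ℕ) [CharP (ResidueField R) p]
    [PerfectRing (ResidueField R) p] (hϖ : Irreducible ϖ) (σ : R →+* R) (hσϖ : σ ϖ = ϖ)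
    (hσ : ∀ x, residue R (σ x) = residue R x) : σ = RingHom.id R := by
  by_contra hne
  obtain ⟨j, w, hw, x₀, hx₀⟩ := exists_eq_pow_mul_isUnit hϖ (f := fun x => σ x - x)
    fun h => hne (RingHom.ext fun x => sub_eq_zero.mp (congrFun h x))
  have cancel : ∀ {a b : R}, ϖ ^ j * a = ϖ ^ j * b → a = b :=
    mul_left_cancel₀ (pow_ne_zero _ hϖ.ne_zero)
  have hw_add : ∀ x y, w (x + y) = w x + w y := fun x y => cancel <| by
    rw [← hw, mul_add, ← hw, ← hw, map_add]; ring
  have hw_mul : ∀ x y, w (x * y) = σ x * w y + w x * y := fun x y => cancel <| by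
    rw [← hw, mul_add, ← mul_assoc, mul_comm _ (σ x), mul_assoc, ← hw, ← mul_assoc, ← hw,
      map_mul]; ring
  let D : Derivation ℤ R (ResidueField R) := Derivation.mk'
    (AddMonoidHom.mk' (fun x => residue R (w x)) (by simp [hw_add])).toIntLinearMap
    fun x y => by simp [hw_mul, hσ, Algebra.smul_def, mul_comm]
  have hwϖ : w ϖ = 0 := cancel (by rw [← hw, hσϖ, sub_self, mul_zero])
  have hD : ∀ x ∈ IsLocalRing.maximalIdeal R, D x = 0 := by
    intro x hx
    obtain ⟨c, rfl⟩ := Ideal.mem_span_singleton'.mp ((irreducible_iff_uniformizer ϖ).mp hϖ ▸ hx)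
    simp [D, hwϖ, Algebra.smul_def, hϖ.not_isUnit]
  have hDx₀ : residue R (w x₀) = 0 :=
    DFunLike.congr_fun (Derivation.eq_zero_of_forall_mem_maximalIdeal p D hD) x₀
  exact (residue_eq_zero_iff _).mp hDx₀ hx₀

theorem faithfulSMul_residueField {G : Type*} [Group G] [MulSemiringAction G R]
    [FaithfulSMul G R] (p : ℕ) [CharP (ResidueField R) p] [PerfectRing (ResidueField R) p] (hϖ : Irreducible ϖ) (hfix : ∀ g : G, g • ϖ = ϖ) :
    FaithfulSMul G (ResidueField R) := by
  refine ⟨fun {g h} hgh => ?_⟩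
  have hid := ringHom_eq_id_of_map_irreducible p hϖ (MulSemiringAction.toRingHom G R (g⁻¹ * h))
    (hfix _) fun x => by simp [mul_smul, ← hgh]
  rw [← inv_mul_eq_one]
  exact eq_of_smul_eq_smul fun x => (DFunLike.congr_fun hid x).trans (one_smul G x).symm

end IsDiscreteValuationRing

namespace ValuationSubring

open scoped Pointwise

variable {K L : Type*} [Field K] [Field L] [Algebra K L] (O : ValuationSubring L)

theorem decompositionSubgroup_eq_top (hO : ∀ σ : L ≃ₐ[K] L, ∀ x ∈ O, σ x ∈ O) :
    O.decompositionSubgroup K = ⊤ := by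
  refine Subgroup.eq_top_iff' _ |>.mpr fun σ => MulAction.mem_stabilizer_iff.mpr ?_
  ext x
  rw [mem_pointwise_smul_iff_inv_smul_mem]
  exact ⟨fun hx => by simpa using hO σ _ hx, fun hx => hO σ⁻¹ x hx⟩

instance : FaithfulSMul (O.decompositionSubgroup K) O := by
  refine ⟨fun {g h} hgh => Subtype.ext <| AlgEquiv.ext fun z => ?_⟩
  rcases O.mem_or_inv_mem z with hz | hz
  · exact congrArg Subtype.val (hgh ⟨z, hz⟩)
  · have : (g : L ≃ₐ[K] L) z⁻¹ = (h : L ≃ₐ[K] L) z⁻¹ := congrArg Subtype.val (hgh ⟨z⁻¹, hz⟩)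
    simpa using this

theorem exists_mem_irreducible_of_nonunits_eq [IsDiscreteValuationRing O] {ϖ : L}
    (h : ∀ x : L, (x ∈ O ∧ ∀ y ∈ O, x * y ≠ 1) ↔ ∃ y ∈ O, x = ϖ * y) :
    ∃ hϖ : ϖ ∈ O, Irreducible (⟨ϖ, hϖ⟩ : O) := by
  obtain ⟨hϖ, -⟩ := (h ϖ).mpr ⟨1, O.one_mem, (mul_one ϖ).symm⟩
  refine ⟨hϖ, (IsDiscreteValuationRing.irreducible_iff_uniformizer _).mpr ?_⟩
  ext x
  rw [mem_maximalIdeal, _root_.mem_nonunits_iff, Ideal.mem_span_singleton', isUnit_iff_exists_inv]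
  constructor
  · intro hx
    obtain ⟨y, hy, hxy⟩ := (h x).mp ⟨x.2, fun y hy h1 => hx ⟨⟨y, hy⟩, Subtype.ext h1⟩⟩
    exact ⟨⟨y, hy⟩, Subtype.ext (hxy ▸ mul_comm _ _)⟩
  · rintro ⟨a, rfl⟩ ⟨b, hb⟩
    exact ((h _).mpr ⟨a, a.2, mul_comm _ _⟩).2 b b.2 (congrArg Subtype.val hb)

end ValuationSubring

section GaloisAction

variable {K L : Type*} [Field K] [Field L] [Algebra K L] {n : ℕ}

@[simp]
theorem val_galAct (σ : L ≃ₐ[K] L) (g : (Matrix (Fin n) (Fin n) L)ˣ) :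
    (galAct σ g : Matrix (Fin n) (Fin n) L) = (g : Matrix (Fin n) (Fin n) L).map σ :=
  rfl

@[simp]
theorem galAct_one (g : (Matrix (Fin n) (Fin n) L)ˣ) : galAct (1 : L ≃ₐ[K] L) g = g :=
  Units.ext rfl

end GaloisAction

theorem glO_units_map {L : Type*} [Field L] (O : ValuationSubring L) {n : ℕ}
    (U : (Matrix (Fin n) (Fin n) O)ˣ) :
    glO O (Units.map (O.subtype.mapMatrix : Matrix (Fin n) (Fin n) O →+* _).toMonoidHom U) :=
  ⟨fun i j => (U.val i j).2, fun i j => by rw [← map_inv]; exact (U⁻¹.val i j).2⟩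

theorem stmt8_general {K L : Type*} [Field K] [Field L] [Algebra K L]
    [FiniteDimensional K L]
    (O : ValuationSubring L) [IsDiscreteValuationRing O]
    [Finite (IsLocalRing.ResidueField O)]
    (hGal : ∀ (σ : L ≃ₐ[K] L), ∀ x ∈ O, σ x ∈ O)
    (π₀ : K)
    -- unramifiedness: the maximal ideal of O is generated by π₀ ∈ K
    (hπ : ∀ x : L, (x ∈ O ∧ ∀ y ∈ O, x * y ≠ 1) ↔
        ∃ y ∈ O, x = algebraMap K L π₀ * y)
    (n : ℕ) :
    ∀ c : (L ≃ₐ[K] L) → (Matrix (Fin n) (Fin n) L)ˣ,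
      (∀ σ, glO O (c σ)) →
      (∀ σ τ : L ≃ₐ[K] L, c (σ * τ) = c σ * galAct σ (c τ)) →
      ∃ u : (Matrix (Fin n) (Fin n) L)ˣ, glO O u ∧
        ∀ σ : L ≃ₐ[K] L, c σ = u * (galAct σ u)⁻¹ := by
  intro c hc hcoc
  classical
  let G := O.decompositionSubgroup K
  have hG : ∀ σ, σ ∈ G := by simp [G, O.decompositionSubgroup_eq_top hGal]
  obtain ⟨hπO, hϖ⟩ := O.exists_mem_irreducible_of_nonunits_eq hπ
  obtain ⟨p, _⟩ := CharP.exists (ResidueField O)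
  have : Fact p.Prime := ⟨CharP.char_is_prime (ResidueField O) p⟩
  have : PerfectRing (ResidueField O) p := .ofFiniteOfIsReduced p _
  have : FaithfulSMul G (ResidueField O) :=
    IsDiscreteValuationRing.faithfulSMul_residueField p hϖ fun g => Subtype.ext (g.1.commutes π₀)
  let ι : Matrix (Fin n) (Fin n) O →+* Matrix (Fin n) (Fin n) L := O.subtype.mapMatrix
  have hι : Function.Injective ι := Matrix.map_injective Subtype.val_injective
  have hιsmul : ∀ (g : G) M, ι (g • M) = (ι M).map g.1 := fun _ _ => rfl
  choose A hA using fun σ => (⟨.of fun i j => ⟨_, (hc σ).1 i j⟩, rfl⟩ :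
    ∃ M : Matrix (Fin n) (Fin n) O, ι M = c σ)
  have hc1 : c 1 = 1 := by simpa using (hcoc 1 1).symm
  obtain ⟨u, hu, hfix⟩ := IsMatrixCocycle.exists_isUnit_fixed_of_isLocalRing
    (A := fun g : G => A g) (fun g h => hι (by simp [hA, hcoc, hιsmul])) (hι (by simp [hA, hc1]))
  refine ⟨Units.map ι.toMonoidHom hu.unit, glO_units_map O hu.unit, fun σ => ?_⟩
  rw [eq_mul_inv_iff_mul_eq]
  ext : 1
  simpa [hA, hιsmul] using congrArg ι (hfix ⟨σ, hG σ⟩)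

theorem stmt8 {K L : Type*} [Field K] [Field L] [Algebra K L]
    [FiniteDimensional K L] [IsGalois K L]
    (O : ValuationSubring L) [IsDiscreteValuationRing O]
    [Finite (IsLocalRing.ResidueField O)]
    (hGal : ∀ (σ : L ≃ₐ[K] L), ∀ x ∈ O, σ x ∈ O)
    (π₀ : K)
    -- unramifiedness: the maximal ideal of O is generated by π₀ ∈ K
    (hπ : ∀ x : L, (x ∈ O ∧ ∀ y ∈ O, x * y ≠ 1) ↔
        ∃ y ∈ O, x = algebraMap K L π₀ * y)
    (n : ℕ) :
    ∀ c : (L ≃ₐ[K] L) → (Matrix (Fin n) (Fin n) L)ˣ,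
      (∀ σ, glO O (c σ)) →
      (∀ σ τ : L ≃ₐ[K] L, c (σ * τ) = c σ * galAct σ (c τ)) →
      ∃ u : (Matrix (Fin n) (Fin n) L)ˣ, glO O u ∧
        ∀ σ : L ≃ₐ[K] L, c σ = u * (galAct σ u)⁻¹ :=
  stmt8_general O hGal π₀ hπ n
end

section
/- Let F be a nonarchimedean local field, A a central simple F-algebra containing a finite unramified extension K of F with centralizer C, and let L/K be a finite unramified extension. Let θ be a character of a compact open subgroup of (C ⊗_K L)× (with the Galois group Gal(L/K) acting on C ⊗_K L through the second factor). Suppose θ∘σ lies in the same conjugation orbit data as θ for all σ ∈ Gal(L/K), and suppose u ∈ (C⊗_K L)× conjugates θ_1 to θ_2 where θ_1, θ_2 are Gal(L/K)-invariant (in the sense θ_i ∘ σ = θ_i). If the stabilizer J of θ_2 in the unit group of a Galois-stable order satisfies H¹(Gal(L/K), J) = 1, then u can be modified by an element of J so that the conjugating element lies in C× = (C ⊗_K L)^{Gal(L/K)}, i.e., θ_1 and θ_2 are conjugate under C×. -/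
/-!
The map `σ ↦ u⁻¹ σ(u)` is a nonabelian 1-cocycle with values in `J`, so by `H¹(G, J) = 1` it
equals `σ ↦ j (σ j)⁻¹` for some `j ∈ J`. Then `σ(u j) = u (u⁻¹ σ(u)) σ(j) = u j`, and `u j`
still conjugates `θ₂` to `θ₁` because `j` stabilizes `θ₂`.
-/

section Cocycle

variable {G X : Type*} [Monoid G] [Group X] [MulDistribMulAction G X]

def IsOneCocycle (c : G → X) : Prop :=
  ∀ σ τ : G, c (σ * τ) = c σ * (σ • c τ)

theorem isOneCocycle_inv_mul_smul (u : X) : IsOneCocycle fun σ : G => u⁻¹ * (σ • u) := by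
  intro σ τ
  simp only [mul_smul, smul_mul', smul_inv']
  group

theorem smul_mul_eq_self_of_inv_mul_smul_eq {σ : G} {u j : X}
    (h : u⁻¹ * (σ • u) = j * (σ • j)⁻¹) : σ • (u * j) = u * j := by
  rw [smul_mul', eq_mul_of_inv_mul_eq h]
  group

end Cocycle

section Conjugation

variable {X R : Type*} [Group X]

def ConjugatesInto (w : X) (H : Subgroup X) (θ : X → R) (H' : Subgroup X) (θ' : X → R) :
    Prop :=
  ∀ x ∈ H, w * x * w⁻¹ ∈ H' ∧ θ x = θ' (w * x * w⁻¹)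

theorem ConjugatesInto.mul {u v : X} {H H' H'' : Subgroup X} {θ θ' θ'' : X → R}
    (hu : ConjugatesInto u H' θ' H'' θ'') (hv : ConjugatesInto v H θ H' θ') :
    ConjugatesInto (u * v) H θ H'' θ'' := by
  intro x hx
  obtain ⟨hvx, hθv⟩ := hv x hx
  obtain ⟨huvx, hθu⟩ := hu _ hvx
  have hconj : u * v * x * (u * v)⁻¹ = u * (v * x * v⁻¹) * u⁻¹ := by group
  exact ⟨hconj ▸ huvx, hconj ▸ hθv.trans hθu⟩

end Conjugation

theorem stmt18_general {G X : Type*} [Group G] [Group X]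
    [MulDistribMulAction G X]
    (H1 H2 : Subgroup X) (θ1 θ2 : X → ℂ) (u : X) (J : Subgroup X)
    -- u conjugates θ₂ to θ₁
    (hu : ∀ x ∈ H2, u * x * u⁻¹ ∈ H1 ∧ θ2 x = θ1 (u * x * u⁻¹))
    -- J is Galois-stable and normalizes (H₂, θ₂)
    (hJnorm : ∀ j ∈ J, ∀ x ∈ H2, j * x * j⁻¹ ∈ H2 ∧ θ2 (j * x * j⁻¹) = θ2 x)
    -- the 1-cocycle σ ↦ u⁻¹·σ(u) is valued in J
    (hcoc : ∀ σ : G, u⁻¹ * (σ • u) ∈ J)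
    -- H¹(G, J) is trivial
    (hH1triv : ∀ c : G → X, (∀ σ, c σ ∈ J) →
        (∀ σ τ : G, c (σ * τ) = c σ * (σ • c τ)) →
        ∃ j ∈ J, ∀ σ : G, c σ = j * (σ • j)⁻¹) :
    -- conclusion: a G-invariant element of X (an element of C×) conjugates
    -- θ₂ to θ₁, and it differs from u by an element of J
    ∃ w : X, (∀ σ : G, σ • w = w) ∧ (∃ j ∈ J, w = u * j) ∧
      ∀ x ∈ H2, w * x * w⁻¹ ∈ H1 ∧ θ2 x = θ1 (w * x * w⁻¹) := by
  obtain ⟨j, hjJ, hj⟩ := hH1triv _ hcoc (isOneCocycle_inv_mul_smul u)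
  have hjθ : ConjugatesInto j H2 θ2 H2 θ2 := fun x hx =>
    ⟨(hJnorm j hjJ x hx).1, (hJnorm j hjJ x hx).2.symm⟩
  exact ⟨u * j, fun σ => smul_mul_eq_self_of_inv_mul_smul_eq (hj σ), ⟨j, hjJ, rfl⟩,
    ConjugatesInto.mul hu hjθ⟩

theorem stmt18 {G X : Type*} [Group G] [Finite G] [Group X]
    [MulDistribMulAction G X]
    (H1 H2 : Subgroup X) (θ1 θ2 : X → ℂ) (u : X) (J : Subgroup X)
    -- the characters are Galois-invariant and the subgroups Galois-stable
    (hH1 : ∀ (σ : G), ∀ x ∈ H1, σ • x ∈ H1)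
    (hH2 : ∀ (σ : G), ∀ x ∈ H2, σ • x ∈ H2)
    (hθ1 : ∀ (σ : G) (x : X), x ∈ H1 → θ1 (σ • x) = θ1 x)
    (hθ2 : ∀ (σ : G) (x : X), x ∈ H2 → θ2 (σ • x) = θ2 x)
    -- u conjugates θ₂ to θ₁
    (hu : ∀ x ∈ H2, u * x * u⁻¹ ∈ H1 ∧ θ2 x = θ1 (u * x * u⁻¹))
    -- J is Galois-stable and normalizes (H₂, θ₂)
    (hJGal : ∀ (σ : G), ∀ j ∈ J, σ • j ∈ J)
    (hJnorm : ∀ j ∈ J, ∀ x ∈ H2, j * x * j⁻¹ ∈ H2 ∧ θ2 (j * x * j⁻¹) = θ2 x)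
    -- the 1-cocycle σ ↦ u⁻¹·σ(u) is valued in J
    (hcoc : ∀ σ : G, u⁻¹ * (σ • u) ∈ J)
    -- H¹(G, J) is trivial
    (hH1triv : ∀ c : G → X, (∀ σ, c σ ∈ J) →
        (∀ σ τ : G, c (σ * τ) = c σ * (σ • c τ)) →
        ∃ j ∈ J, ∀ σ : G, c σ = j * (σ • j)⁻¹) :
    -- conclusion: a G-invariant element of X (an element of C×) conjugates
    -- θ₂ to θ₁, and it differs from u by an element of J
    ∃ w : X, (∀ σ : G, σ • w = w) ∧ (∃ j ∈ J, w = u * j) ∧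
      ∀ x ∈ H2, w * x * w⁻¹ ∈ H1 ∧ θ2 x = θ1 (w * x * w⁻¹) :=
  stmt18_general H1 H2 θ1 θ2 u J hu hJnorm hcoc hH1triv
end
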